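/- arXiv:1910.01175 — 9 statements merged into one kernel-verified Lean document; each statement's English description precedes it below -/
import Mathlib

section
/- Let η be a complex number with η ≠ 1. Suppose complex numbers a_{jk}, b_{jk}, c_{jk}, d_{jk} (j,k ∈ {0,1}) satisfy a_{11}b_{11} = η·c_{11}d_{11} and a_{jk}b_{ℓm} = c_{jℓ}d_{km} whenever jkℓm = 0, and a_{11}, b_{11} are nonzero. Then for all r,s ∈ {0,1}: a_{r0}b_{0s} = 0, a_{0r}b_{s0} = 0, c_{r0}d_{0s} = 0, and c_{0r}d_{s0} = 0. -/
private lemma stmt_1_aux (η : ℂ) (hη : η ≠ 1) (a b c d : Fin 2 → Fin 2 → ℂ)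
    (h1 : a 1 1 * b 1 1 = η * (c 1 1 * d 1 1))
    (h2 : ∀ j k l m : Fin 2, ¬(j = 1 ∧ k = 1 ∧ l = 1 ∧ m = 1) →
      a j k * b l m = c j l * d k m)
    (ha : a 1 1 ≠ 0) (hb : b 1 1 ≠ 0) :
    ∀ r s : Fin 2, a r 0 * b 0 s = 0 := by
  intro r s
  have hP : a 1 1 * b 1 1 ≠ 0 := mul_ne_zero ha hb
  have hη1 : η - 1 ≠ 0 := sub_ne_zero.mpr hη
  have hX : a r 0 * b 0 s * (a 1 1 * b 1 1) = a r 0 * b 0 s * (c 1 1 * d 1 1) := by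
    by_cases hrs : r = 1 ∧ s = 1
    · obtain ⟨hr, hs⟩ := hrs
      subst hr; subst hs
      calc a 1 0 * b 0 1 * (a 1 1 * b 1 1)
          = (a 1 0 * b 1 1) * (a 1 1 * b 0 1) := by ring
        _ = (c 1 1 * d 0 1) * (c 1 0 * d 1 1) := by
            rw [h2 1 0 1 1 (by simp), h2 1 1 0 1 (by simp)]
        _ = (c 1 0 * d 0 1) * (c 1 1 * d 1 1) := by ring
        _ = a 1 0 * b 0 1 * (c 1 1 * d 1 1) := by rw [← h2 1 0 0 1 (by simp)]
    · calc a r 0 * b 0 s * (a 1 1 * b 1 1)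
          = (a r 0 * b 1 1) * (a 1 1 * b 0 s) := by ring
        _ = (c r 1 * d 0 1) * (c 1 0 * d 1 s) := by
            rw [h2 r 0 1 1 (by simp), h2 1 1 0 s (by simp)]
        _ = (c r 1 * d 1 s) * (c 1 0 * d 0 1) := by ring
        _ = (a r 1 * b 1 s) * (a 1 0 * b 0 1) := by
            rw [← h2 r 1 1 s (by simpa using hrs), ← h2 1 0 0 1 (by simp)]
        _ = (a r 1 * b 0 1) * (a 1 0 * b 1 s) := by ring
        _ = (c r 0 * d 1 1) * (c 1 1 * d 0 s) := by
            rw [h2 r 1 0 1 (by simp), h2 1 0 1 s (by simp)]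
        _ = (c r 0 * d 0 s) * (c 1 1 * d 1 1) := by ring
        _ = a r 0 * b 0 s * (c 1 1 * d 1 1) := by rw [← h2 r 0 0 s (by simp)]
  have h' : (η - 1) * (a r 0 * b 0 s * (a 1 1 * b 1 1)) = 0 := by
    linear_combination η * hX - (a r 0 * b 0 s) * h1
  rcases mul_eq_zero.1 h' with h | h
  · exact absurd h hη1
  · rcases mul_eq_zero.1 h with h | h
    · exact h
    · exact absurd h hP

theorem stmt_1 (η : ℂ) (hη : η ≠ 1) (a b c d : Fin 2 → Fin 2 → ℂ)
    (h1 : a 1 1 * b 1 1 = η * (c 1 1 * d 1 1))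
    (h2 : ∀ j k l m : Fin 2, ¬(j = 1 ∧ k = 1 ∧ l = 1 ∧ m = 1) →
      a j k * b l m = c j l * d k m)
    (ha : a 1 1 ≠ 0) (hb : b 1 1 ≠ 0) :
    ∀ r s : Fin 2, a r 0 * b 0 s = 0 ∧ a 0 r * b s 0 = 0 ∧
      c r 0 * d 0 s = 0 ∧ c 0 r * d s 0 = 0 := by
  have key1 : ∀ r s : Fin 2, a r 0 * b 0 s = 0 :=
    stmt_1_aux η hη a b c d h1 h2 ha hb
  have key2 : ∀ r s : Fin 2, a 0 r * b s 0 = 0 := by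
    have := stmt_1_aux η hη (fun j k => a k j) (fun l m => b m l)
      (fun j l => d j l) (fun k m => c k m)
      (by simpa [mul_comm] using h1)
      (by
        intro j k l m hjklm
        have := h2 k j m l (by tauto)
        linear_combination this)
      ha hb
    intro r s
    simpa using this r s
  intro r s
  refine ⟨key1 r s, key2 r s, ?_, ?_⟩
  · rw [← h2 r 0 0 s (by simp)]; exact key1 r s
  · rw [← h2 0 s r 0 (by simp)]; exact key2 s r
end

section
/- Let η be a complex number with η ≠ 1. Suppose complex numbers a_{jk}, b_{jk}, c_{jk}, d_{jk} satisfy a_{11}b_{11} = η·c_{11}d_{11}, a_{jk}b_{ℓm} = c_{jℓ}d_{km} whenever jkℓm = 0, and a_{11}b_{11} ≠ 0. Then c_{01}c_{10} = η·c_{00}c_{11} and d_{01}d_{10} = η·d_{00}d_{11}. -/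
theorem stmt_2 (η : ℂ) (hη : η ≠ 1) (a b c d : Fin 2 → Fin 2 → ℂ)
    (h1 : a 1 1 * b 1 1 = η * (c 1 1 * d 1 1))
    (h2 : ∀ j k l m : Fin 2, ¬(j = 1 ∧ k = 1 ∧ l = 1 ∧ m = 1) →
      a j k * b l m = c j l * d k m)
    (hab : a 1 1 * b 1 1 ≠ 0) :
    c 0 1 * c 1 0 = η * (c 0 0 * c 1 1) ∧ d 0 1 * d 1 0 = η * (d 0 0 * d 1 1) := by
  have e1 := h2 0 1 1 1 (by simp)
  have e2 := h2 1 1 0 1 (by simp)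
  have e3 := h2 0 1 0 1 (by simp)
  have e4 := h2 1 0 1 1 (by simp)
  have e5 := h2 1 1 1 0 (by simp)
  have e6 := h2 1 0 1 0 (by simp)
  rw [h1] at hab
  have hc : c 1 1 ≠ 0 := fun h => hab (by rw [h]; ring)
  have hd : d 1 1 ≠ 0 := fun h => hab (by rw [h]; ring)
  constructor
  · apply mul_right_cancel₀ (mul_ne_zero hd hd)
    linear_combination -((c 1 0 * d 1 1) * e1 + (a 0 1 * b 1 1) * e2) +
      (η * c 1 1 * d 1 1) * e3 + (a 0 1 * b 0 1) * h1
  · apply mul_right_cancel₀ (mul_ne_zero hc hc)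
    linear_combination -((d 1 0 * c 1 1) * e4 + (a 1 0 * b 1 1) * e5) +
      (η * c 1 1 * d 1 1) * e6 + (a 1 0 * b 1 0) * h1
end

section
/- Let η be a complex number with η ≠ 1. Suppose complex numbers a_{jk} (j,k ∈ {0,1}), b_j, c_j (j ∈ {0,1}), and d_{jk} (j,k ∈ {0,1}) satisfy a_{11}b_1 = η·c_1·d_{11}, and a_{jk}b_m = c_j·d_{km} for all j,k,m ∈ {0,1} with jkm = 0. If a_{11} ≠ 0 and b_1 ≠ 0, then either c_0 = 0 or (d_{00} = 0 and d_{10} = 0). -/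
theorem stmt_3 (η : ℂ) (hη : η ≠ 1) (a : Fin 2 → Fin 2 → ℂ) (b c : Fin 2 → ℂ)
    (d : Fin 2 → Fin 2 → ℂ)
    (h1 : a 1 1 * b 1 = η * (c 1 * d 1 1))
    (h2 : ∀ j k m : Fin 2, ¬(j = 1 ∧ k = 1 ∧ m = 1) → a j k * b m = c j * d k m)
    (ha : a 1 1 ≠ 0) (hb : b 1 ≠ 0) :
    c 0 = 0 ∨ (d 0 0 = 0 ∧ d 1 0 = 0) := by
  by_cases hc0 : c 0 = 0
  · exact Or.inl hc0
  · right
    have e1 := h2 0 1 1 (by simp)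
    have e2 := h2 1 1 0 (by simp)
    have e3 := h2 0 1 0 (by simp)
    have e4 := h2 1 0 0 (by simp)
    have hcd : c 1 * d 1 1 ≠ 0 := by
      intro h
      exact mul_ne_zero ha hb (by rw [h1, h, mul_zero])
    have hc1 : c 1 ≠ 0 := fun h => hcd (by simp [h])
    have p1 : (a 0 1 * b 1) * (a 1 1 * b 0) = (c 0 * d 1 1) * (c 1 * d 1 0) := by
      rw [e1, e2]
    have p2 : (a 0 1 * b 0) * (a 1 1 * b 1) = (c 0 * d 1 0) * (η * (c 1 * d 1 1)) := by
      rw [e3, h1]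
    have key : (1 - η) * (c 0 * (c 1 * d 1 1) * d 1 0) = 0 := by
      linear_combination p2 - p1
    have h1η : (1 : ℂ) - η ≠ 0 := sub_ne_zero.mpr hη.symm
    have hd10 : d 1 0 = 0 := by
      rcases mul_eq_zero.mp key with h | h
      · exact absurd h h1η
      · rcases mul_eq_zero.mp h with h' | h'
        · rcases mul_eq_zero.mp h' with h'' | h''
          · exact absurd h'' hc0
          · exact absurd h'' hcd
        · exact h'
    have hb0 : b 0 = 0 := by
      have : a 1 1 * b 0 = 0 := by rw [e2, hd10, mul_zero]
      exact (mul_eq_zero.mp this).resolve_left ha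
    have hd00 : d 0 0 = 0 := by
      have : c 1 * d 0 0 = 0 := by rw [← e4, hb0, mul_zero]
      exact (mul_eq_zero.mp this).resolve_left hc1
    exact ⟨hd00, hd10⟩
end

section
/- Let η be a complex number with η ≠ 1. Suppose complex numbers a_{jk}, b_m, c_j, d_{km} satisfy a_{11}b_1 = η·c_1·d_{11}, a_{jk}b_m = c_j·d_{km} for all j,k,m ∈ {0,1} with jkm = 0, and a_{11}b_1 ≠ 0. Then a_{00}b_0 = 0, c_0·d_{00} = 0, a_{01}b_0 = 0, and c_0·d_{10} = 0. -/
theorem stmt_4 (η : ℂ) (hη : η ≠ 1) (a : Fin 2 → Fin 2 → ℂ) (b c : Fin 2 → ℂ)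
    (d : Fin 2 → Fin 2 → ℂ)
    (h1 : a 1 1 * b 1 = η * (c 1 * d 1 1))
    (h2 : ∀ j k m : Fin 2, ¬(j = 1 ∧ k = 1 ∧ m = 1) → a j k * b m = c j * d k m)
    (hab : a 1 1 * b 1 ≠ 0) :
    a 0 0 * b 0 = 0 ∧ c 0 * d 0 0 = 0 ∧ a 0 1 * b 0 = 0 ∧ c 0 * d 1 0 = 0 := by
  have e000 := h2 0 0 0 (by simp)
  have e001 := h2 0 0 1 (by simp)
  have e010 := h2 0 1 0 (by simp)
  have e011 := h2 0 1 1 (by simp)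
  have e100 := h2 1 0 0 (by simp)
  have e101 := h2 1 0 1 (by simp)
  have e110 := h2 1 1 0 (by simp)
  have hη' : η - 1 ≠ 0 := sub_ne_zero.mpr hη
  have hc1d11 : c 1 * d 1 1 ≠ 0 := right_ne_zero_of_mul (h1 ▸ hab)
  have hA : c 0 * d 0 1 * (c 1 * d 1 0) = c 0 * d 0 0 * (η * (c 1 * d 1 1)) := by
    rw [← e001, ← e110, ← e000, ← h1]; ring
  have hB : c 0 * d 1 1 * (c 1 * d 0 0) = c 0 * d 1 0 * (c 1 * d 0 1) := by
    rw [← e011, ← e100, ← e010, ← e101]; ring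
  have hC : c 0 * d 1 0 * (η * (c 1 * d 1 1)) = c 0 * d 1 1 * (c 1 * d 1 0) := by
    rw [← e010, ← h1, ← e011, ← e110]; ring
  have k1 : (η - 1) * ((c 0 * d 0 0) * (c 1 * d 1 1)) = 0 := by
    linear_combination -hA - hB
  have k2 : (η - 1) * ((c 0 * d 1 0) * (c 1 * d 1 1)) = 0 := by
    linear_combination hC
  have hcd00 : c 0 * d 0 0 = 0 := by
    rcases mul_eq_zero.mp k1 with h | h
    · exact absurd h hη'
    · rcases mul_eq_zero.mp h with h | h
      · exact h
      · exact absurd h hc1d11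
  have hcd10 : c 0 * d 1 0 = 0 := by
    rcases mul_eq_zero.mp k2 with h | h
    · exact absurd h hη'
    · rcases mul_eq_zero.mp h with h | h
      · exact h
      · exact absurd h hc1d11
  exact ⟨e000.trans hcd00, hcd00, e010.trans hcd10, hcd10⟩
end

section
/- Let η be a complex number with η ≠ 1. Suppose complex numbers a_{jk}, b_m, c_j, d_{km} satisfy a_{11}b_1 = η·c_1·d_{11}, a_{jk}b_m = c_j·d_{km} whenever jkm = 0, and a_{11}b_1 ≠ 0. Then d_{01}d_{10} = η·d_{00}d_{11}. -/
theorem stmt_5 (η : ℂ) (hη : η ≠ 1) (a : Fin 2 → Fin 2 → ℂ) (b c : Fin 2 → ℂ)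
    (d : Fin 2 → Fin 2 → ℂ)
    (h1 : a 1 1 * b 1 = η * (c 1 * d 1 1))
    (h2 : ∀ j k m : Fin 2, ¬(j = 1 ∧ k = 1 ∧ m = 1) → a j k * b m = c j * d k m)
    (hab : a 1 1 * b 1 ≠ 0) :
    d 0 1 * d 1 0 = η * (d 0 0 * d 1 1) := by
  have hc1 : c 1 ≠ 0 := by
    intro h
    apply hab
    rw [h1, h]; ring
  have e1 := h2 1 0 1 (by decide)
  have e2 := h2 1 1 0 (by decide)
  have e3 := h2 1 0 0 (by decide)
  have key : (c 1 * c 1) * (d 0 1 * d 1 0) = (c 1 * c 1) * (η * (d 0 0 * d 1 1)) := by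
    linear_combination (-(a 1 1 * b 0)) * e1 - (c 1 * d 0 1) * e2 + (a 1 0 * b 0) * h1 + (η * (c 1 * d 1 1)) * e3
  exact mul_left_cancel₀ (mul_ne_zero hc1 hc1) key
end

section
/- Let η be a complex number with η ≠ 1. Suppose complex numbers a_j, b_j, c_j, d_j (j ∈ {0,1}) satisfy a_1·b_1 = η·c_1·d_1, and a_j·b_m = c_j·d_m for all j,m ∈ {0,1} with jm = 0. If a_1 ≠ 0 and b_1 ≠ 0, then a_0·b_0 = 0 and c_0·d_0 = 0. -/
theorem stmt_6 (η : ℂ) (hη : η ≠ 1) (a b c d : Fin 2 → ℂ)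
    (h1 : a 1 * b 1 = η * (c 1 * d 1))
    (h2 : ∀ j m : Fin 2, ¬(j = 1 ∧ m = 1) → a j * b m = c j * d m)
    (ha : a 1 ≠ 0) (hb : b 1 ≠ 0) :
    a 0 * b 0 = 0 ∧ c 0 * d 0 = 0 := by
  have e00 := h2 0 0 (by decide)
  have e01 := h2 0 1 (by decide)
  have e10 := h2 1 0 (by decide)
  have hab : a 1 * b 1 ≠ 0 := mul_ne_zero ha hb
  have hcd : c 1 * d 1 ≠ 0 := by
    intro h
    apply hab
    rw [h1, h, mul_zero]
  have key : (c 0 * d 0) * (η * (c 1 * d 1)) = (c 0 * d 0) * (c 1 * d 1) := by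
    linear_combination (-(c 0 * d 0)) * h1 + (-(a 1 * b 1)) * e00 +
      (a 1 * b 0) * e01 + (c 0 * d 1) * e10
  have hz : (c 0 * d 0) * ((η - 1) * (c 1 * d 1)) = 0 := by
    have := sub_eq_zero.mpr key
    linear_combination this
  have : c 0 * d 0 = 0 := by
    rcases mul_eq_zero.mp hz with h | h
    · exact h
    · rcases mul_eq_zero.mp h with h' | h'
      · exact absurd (sub_eq_zero.mp h') hη
      · exact absurd h' hcd
  exact ⟨by rw [e00, this], this⟩
end

section
/- Let S ⊆ [n] with |S| ≥ 2, let η be a complex number with |η| = 1 and η ≠ 1, and let G act on the n-qubit space by G|x⟩ = η|x⟩ if x_i = 1 for all i ∈ S and G|x⟩ = |x⟩ otherwise. Let ψ be a unit vector. Then at least one of the following holds: (1) ψ is S-entangled; (2) Gψ is S-entangled; (3) G simplifies on ψ, i.e., either Gψ = ψ, or there exists i ∈ S such that Gψ = G'ψ where G' is the analogous gate on S \ {i}. -/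
def gate (n : ℕ) (S : Finset (Fin n)) (η : ℂ) (ψ : (Fin n → Bool) → ℂ) :
    (Fin n → Bool) → ℂ :=
  fun x => (if ∀ i ∈ S, x i = true then η else 1) * ψ x

def SSeparable (n : ℕ) (S : Finset (Fin n)) (φ : (Fin n → Bool) → ℂ) : Prop :=
  ∃ (A : Finset (Fin n)) (φA : ({ i : Fin n // i ∈ A } → Bool) → ℂ)
    (φB : ({ i : Fin n // i ∉ A } → Bool) → ℂ),
    (S ∩ A).Nonempty ∧ (S \ A).Nonempty ∧
    (∑ y, ‖φA y‖ ^ 2 = 1) ∧ (∑ z, ‖φB z‖ ^ 2 = 1) ∧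
    ∀ x : Fin n → Bool, φ x = φA (fun i => x i.1) * φB (fun i => x i.1)

def cmb {n : ℕ} (T : Finset (Fin n)) (x y : Fin n → Bool) : Fin n → Bool :=
  fun i => if i ∈ T then x i else y i

def wfun (η : ℂ) (a b : Bool) : ℂ := if a = false ∧ b = true then η else 1

lemma gate_all {n : ℕ} {S : Finset (Fin n)} {η : ℂ} {ψ : (Fin n → Bool) → ℂ}
    {x : Fin n → Bool} (h : ∀ i ∈ S, x i = true) :
    gate n S η ψ x = η * ψ x := by
  simp only [gate]; rw [if_pos h]

lemma gate_not {n : ℕ} {S : Finset (Fin n)} {η : ℂ} {ψ : (Fin n → Bool) → ℂ}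
    {x : Fin n → Bool} (h : ¬ ∀ i ∈ S, x i = true) :
    gate n S η ψ x = ψ x := by
  simp only [gate]; rw [if_neg h, one_mul]

lemma cmb_compl {n : ℕ} (C : Finset (Fin n)) (x y : Fin n → Bool) :
    cmb Cᶜ x y = cmb C y x := by
  funext i
  simp only [cmb, Finset.mem_compl]
  by_cases h : i ∈ C <;> simp [h]

lemma sep_minor {n : ℕ} {S : Finset (Fin n)} {φ : (Fin n → Bool) → ℂ}
    (h : SSeparable n S φ) :
    ∃ A : Finset (Fin n), (S ∩ A).Nonempty ∧ (S \ A).Nonempty ∧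
      ∀ x y, φ (cmb A x y) * φ (cmb A y x) = φ x * φ y := by
  obtain ⟨A, φA, φB, h1, h2, _, _, hprod⟩ := h
  refine ⟨A, h1, h2, fun x y => ?_⟩
  have hA : ∀ x y : Fin n → Bool,
      (fun i : {i : Fin n // i ∈ A} => cmb A x y i.1) = (fun i => x i.1) := by
    intro x y; funext i; simp [cmb, i.2]
  have hB : ∀ x y : Fin n → Bool,
      (fun i : {i : Fin n // i ∉ A} => cmb A x y i.1) = (fun i => y i.1) := by
    intro x y; funext i; simp [cmb, i.2]
  rw [hprod, hprod, hprod, hprod, hA x y, hB x y, hA y x, hB y x]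
  ring

lemma gate_inv {n : ℕ} (S : Finset (Fin n)) (η : ℂ) (hη0 : η ≠ 0)
    (ψ : (Fin n → Bool) → ℂ) :
    gate n S η⁻¹ (gate n S η ψ) = ψ := by
  funext x
  simp only [gate]
  by_cases h : ∀ i ∈ S, x i = true
  · rw [if_pos h, if_pos h, ← mul_assoc, inv_mul_cancel₀ hη0, one_mul]
  · rw [if_neg h, if_neg h]; ring


lemma abs_lemma (η : ℂ) (h0 : η ≠ 0) (h1 : η ≠ 1) (f : Bool → Bool → Bool → Bool → ℂ)
    (M1 : ∀ P Q r s P' Q' r' s' : Bool,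
      f P Q' r s' * f P' Q r' s = f P Q r s * f P' Q' r' s')
    (M2 : ∀ P Q r s P' Q' r' s' : Bool,
      wfun η P Q' * f P Q' r' s * (wfun η P' Q * f P' Q r s') =
      wfun η P Q * f P Q r s * (wfun η P' Q' * f P' Q' r' s'))
    (hu : f true true true true ≠ 0) (hv : f false false false false ≠ 0) :
    False := by
  have R1 := M1 true true true true false false false false
  have R2 := M2 true true true true false false false false
  have R3 := M1 true false true false true false false true
  have R4 := M1 false true false true false true true false
  have R5a := M1 true false false false false true false false
  have R5b := M2 true false false false false true false false
  simp only [wfun, if_pos, if_neg, and_self, and_true, and_false, true_and, false_and,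
    Bool.true_eq_false, Bool.false_eq_true, if_true, if_false, one_mul, mul_one,
    ite_true, ite_false] at R2 R5b
  -- R1 : f T F T F * f F T F T = f TTTT * f FFFF
  -- R2 : f T F F T * (η * f F T T F) = f TTTT * f FFFF
  have huv : f true true true true * f false false false false ≠ 0 := mul_ne_zero hu hv
  have n1 : f true false true false ≠ 0 ∧ f false true false true ≠ 0 := by
    have : f true false true false * f false true false true ≠ 0 := by rw [R1]; exact huv
    exact mul_ne_zero_iff.mp this
  have n2 : f true false false true ≠ 0 ∧ f false true true false ≠ 0 := by
    have : f true false false true * (η * f false true true false) ≠ 0 := by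
      rw [R2]; exact huv
    obtain ⟨a, b⟩ := mul_ne_zero_iff.mp this
    exact ⟨a, (mul_ne_zero_iff.mp b).2⟩
  -- R3 : f TFTT * f TFFF = f TFTF * f TFFT
  have k1 : f true false false false ≠ 0 := by
    have : f true false true true * f true false false false ≠ 0 := by
      rw [R3]; exact mul_ne_zero n1.1 n2.1
    exact (mul_ne_zero_iff.mp this).2
  -- R4 : f FTFF * f FTTT = f FTFT * f FTTF
  have k2 : f false true false false ≠ 0 := by
    have : f false true false false * f false true true true ≠ 0 := by
      rw [R4]; exact mul_ne_zero n1.2 n2.2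
    exact (mul_ne_zero_iff.mp this).1
  -- R5a : f TTFF * f FFFF = f TFFF * f FTFF
  -- R5b : f TTFF * f FFFF = f TFFF * (η * f FTFF)
  rw [R5a] at R5b
  have hz : (η - 1) * (f true false false false * f false true false false) = 0 := by
    linear_combination -R5b
  rcases mul_eq_zero.mp hz with h | h
  · exact h1 (sub_eq_zero.mp h)
  · exact mul_ne_zero k1 k2 h


def pt {n : ℕ} (A C : Finset (Fin n)) (u v : Fin n → Bool) (a b c d : Bool) :
    Fin n → Bool :=
  fun i => if i ∈ A then (if i ∈ C then cond a (u i) (v i) else cond b (u i) (v i))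
    else (if i ∈ C then cond c (u i) (v i) else cond d (u i) (v i))

lemma cmb_A_pt {n : ℕ} (A C : Finset (Fin n)) (u v : Fin n → Bool)
    (a b c d a' b' c' d' : Bool) :
    cmb A (pt A C u v a b c d) (pt A C u v a' b' c' d') = pt A C u v a b c' d' := by
  funext i
  by_cases h1 : i ∈ A <;> by_cases h2 : i ∈ C <;> simp [cmb, pt, h1, h2]

lemma cmb_C_pt {n : ℕ} (A C : Finset (Fin n)) (u v : Fin n → Bool)
    (a b c d a' b' c' d' : Bool) :
    cmb C (pt A C u v a b c d) (pt A C u v a' b' c' d') = pt A C u v a b' c d' := by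
  funext i
  by_cases h1 : i ∈ A <;> by_cases h2 : i ∈ C <;> simp [cmb, pt, h1, h2]

lemma pt_tt {n : ℕ} (A C : Finset (Fin n)) (u v : Fin n → Bool) :
    pt A C u v true true true true = u := by
  funext i
  by_cases h1 : i ∈ A <;> by_cases h2 : i ∈ C <;> simp [pt, h1, h2]

lemma pt_ff {n : ℕ} (A C : Finset (Fin n)) (u v : Fin n → Bool) :
    pt A C u v false false false false = v := by
  funext i
  by_cases h1 : i ∈ A <;> by_cases h2 : i ∈ C <;> simp [pt, h1, h2]

lemma u_ne {n : ℕ} (S C : Finset (Fin n)) (η : ℂ) (hη0 : η ≠ 0)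
    (ψ : (Fin n → Bool) → ℂ)
    (MG : ∀ x y, gate n S η ψ (cmb C x y) * gate n S η ψ (cmb C y x)
        = gate n S η ψ x * gate n S η ψ y)
    (p : Fin n) (hpS : p ∈ S) (hpC : p ∈ C)
    (xs xp : Fin n → Bool)
    (hxs : ∀ i ∈ S, xs i = true) (hxsne : ψ xs ≠ 0)
    (hxp : ∀ i ∈ S, i ≠ p → xp i = true) (hxpp : xp p = false) (hxpne : ψ xp ≠ 0) :
    ψ (cmb C xp xs) ≠ 0 := by
  have h1 := MG xp xs
  have e1 : gate n S η ψ (cmb C xp xs) = ψ (cmb C xp xs) := by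
    have hno : ¬ ∀ i ∈ S, cmb C xp xs i = true := by
      intro h
      have := h p hpS
      rw [cmb] at this
      simp [hpC, hxpp] at this
    exact gate_not hno
  have e2 : gate n S η ψ (cmb C xs xp) = η * ψ (cmb C xs xp) := by
    have hall : ∀ i ∈ S, cmb C xs xp i = true := by
      intro i hi
      by_cases h : i ∈ C
      · simp [cmb, h, hxs i hi]
      · simp [cmb, h, hxp i hi (fun he => h (he ▸ hpC))]
    exact gate_all hall
  have e3 : gate n S η ψ xp = ψ xp := by
    have hno : ¬ ∀ i ∈ S, xp i = true := by
      intro h; have := h p hpS; rw [this] at hxpp; exact Bool.noConfusion hxpp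
    exact gate_not hno
  have e4 : gate n S η ψ xs = η * ψ xs := gate_all hxs
  rw [e1, e2, e3, e4] at h1
  have hr : ψ xp * (η * ψ xs) ≠ 0 := mul_ne_zero hxpne (mul_ne_zero hη0 hxsne)
  intro h0
  apply hr
  rw [← h1, h0, zero_mul]

lemma core {n : ℕ} (S A C : Finset (Fin n)) (η : ℂ) (hη0 : η ≠ 0) (hη1 : η ≠ 1)
    (ψ : (Fin n → Bool) → ℂ)
    (Mψ : ∀ x y, ψ (cmb A x y) * ψ (cmb A y x) = ψ x * ψ y)
    (MG : ∀ x y, gate n S η ψ (cmb C x y) * gate n S η ψ (cmb C y x)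
        = gate n S η ψ x * gate n S η ψ y)
    (p q : Fin n) (hpS : p ∈ S) (hqS : q ∈ S)
    (hpA : p ∈ A) (hpC : p ∈ C) (hqA : q ∉ A) (hqC : q ∉ C)
    (xs xp xq : Fin n → Bool)
    (hxs : ∀ i ∈ S, xs i = true) (hxsne : ψ xs ≠ 0)
    (hxp : ∀ i ∈ S, i ≠ p → xp i = true) (hxpp : xp p = false) (hxpne : ψ xp ≠ 0)
    (hxq : ∀ i ∈ S, i ≠ q → xq i = true) (hxqq : xq q = false) (hxqne : ψ xq ≠ 0) :
    False := by
  have hpq : p ≠ q := fun h => hqC (h ▸ hpC)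
  -- the C-complement minor for the gate
  have MG' : ∀ x y, gate n S η ψ (cmb Cᶜ x y) * gate n S η ψ (cmb Cᶜ y x)
      = gate n S η ψ x * gate n S η ψ y := by
    intro x y
    have hc : ∀ x y : Fin n → Bool, cmb Cᶜ x y = cmb C y x := by
      intro x y; funext i
      simp only [cmb, Finset.mem_compl]
      by_cases h : i ∈ C <;> simp [h]
    rw [hc, hc]
    linear_combination MG y x
  set u : Fin n → Bool := cmb C xp xs with hu_def
  set v : Fin n → Bool := cmb C xs xq with hv_def
  have hune : ψ u ≠ 0 := u_ne S C η hη0 ψ MG p hpS hpC xs xp hxs hxsne hxp hxpp hxpne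
  have hvne : ψ v ≠ 0 := by
    have := u_ne S Cᶜ η hη0 ψ MG' q hqS (Finset.mem_compl.mpr hqC) xs xq hxs hxsne
      hxq hxqq hxqne
    have he : cmb Cᶜ xq xs = v := by
      rw [hv_def]; funext i
      simp only [cmb, Finset.mem_compl]
      by_cases h : i ∈ C <;> simp [h]
    rwa [he] at this
  have hup : u p = false := by rw [hu_def]; simp [cmb, hpC, hxpp]
  have hu1 : ∀ i ∈ S, i ≠ p → u i = true := by
    intro i hi hne
    rw [hu_def]
    by_cases h : i ∈ C
    · simp [cmb, h, hxp i hi hne]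
    · simp [cmb, h, hxs i hi]
  have hvq : v q = false := by rw [hv_def]; simp [cmb, hqC, hxqq]
  have hv1 : ∀ i ∈ S, i ≠ q → v i = true := by
    intro i hi hne
    rw [hv_def]
    by_cases h : i ∈ C
    · simp [cmb, h, hxs i hi]
    · simp [cmb, h, hxq i hi hne]
  -- all-ones characterization on the lattice
  have hall : ∀ a b c d : Bool,
      (∀ i ∈ S, pt A C u v a b c d i = true) ↔ (a = false ∧ d = true) := by
    intro a b c d
    constructor
    · intro h
      constructor
      · have hp := h p hpS
        simp only [pt, if_pos hpA, if_pos hpC] at hp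
        cases a
        · rfl
        · rw [Bool.cond_true, hup] at hp; exact Bool.noConfusion hp
      · have hq := h q hqS
        simp only [pt, if_neg hqA, if_neg hqC] at hq
        cases d
        · rw [Bool.cond_false, hvq] at hq; exact Bool.noConfusion hq
        · rfl
    · rintro ⟨rfl, rfl⟩ i hi
      by_cases hip : i = p
      · subst hip
        simp [pt, hpA, hpC, hv1 i hi hpq]
      · by_cases hiq : i = q
        · subst hiq
          simp [pt, hqA, hqC, hu1 i hi (Ne.symm hpq)]
        · have hui := hu1 i hi hip
          have hvi := hv1 i hi hiq
          by_cases h1 : i ∈ A <;> by_cases h2 : i ∈ C <;>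
            simp [pt, h1, h2, hui, hvi, Bool.cond_self]
  have gate_pt : ∀ a b c d : Bool,
      gate n S η ψ (pt A C u v a b c d) = wfun η a d * ψ (pt A C u v a b c d) := by
    intro a b c d
    by_cases h : a = false ∧ d = true
    · rw [gate_all ((hall a b c d).mpr h), wfun, if_pos h]
    · rw [gate_not (fun hh => h ((hall a b c d).mp hh)), wfun, if_neg h, one_mul]
  refine abs_lemma η hη0 hη1 (fun P Q r s => ψ (pt A C u v P r s Q)) ?_ ?_ ?_ ?_
  · intro P Q r s P' Q' r' s'
    have := Mψ (pt A C u v P r s Q) (pt A C u v P' r' s' Q')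
    rw [cmb_A_pt, cmb_A_pt] at this
    exact this
  · intro P Q r s P' Q' r' s'
    have := MG (pt A C u v P r s Q) (pt A C u v P' r' s' Q')
    rw [cmb_C_pt, cmb_C_pt, gate_pt, gate_pt, gate_pt, gate_pt] at this
    exact this
  · show ψ (pt A C u v true true true true) ≠ 0
    rw [pt_tt]; exact hune
  · show ψ (pt A C u v false false false false) ≠ 0
    rw [pt_ff]; exact hvne

theorem stmt_13 (n : ℕ) (S : Finset (Fin n)) (hS : 2 ≤ S.card)
    (η : ℂ) (hη : ‖η‖ = 1) (hη1 : η ≠ 1)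
    (ψ : (Fin n → Bool) → ℂ) (hψ : ∑ x, ‖ψ x‖ ^ 2 = 1) :
    ¬ SSeparable n S ψ ∨ ¬ SSeparable n S (gate n S η ψ) ∨
      (gate n S η ψ = ψ ∨ ∃ i ∈ S, gate n S η ψ = gate n (S.erase i) η ψ) := by
  have hη0 : η ≠ 0 := by
    intro h; rw [h] at hη; simp at hη
  by_cases h1 : SSeparable n S ψ
  swap
  · exact Or.inl h1
  by_cases h2 : SSeparable n S (gate n S η ψ)
  swap
  · exact Or.inr (Or.inl h2)
  right; right
  by_contra h3
  push_neg at h3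
  obtain ⟨h3a, h3b⟩ := h3
  -- witness x*: all ones on S, ψ ≠ 0
  obtain ⟨xs, hxs⟩ := Function.ne_iff.mp h3a
  have hxs_all : ∀ i ∈ S, xs i = true := by
    by_contra hc
    exact hxs (gate_not hc)
  have hxs_ne : ψ xs ≠ 0 := by
    intro h0
    apply hxs
    rw [gate_all hxs_all, h0, mul_zero]
  -- witnesses x^i
  have hwit : ∀ i ∈ S, ∃ x : Fin n → Bool,
      (∀ j ∈ S, j ≠ i → x j = true) ∧ x i = false ∧ ψ x ≠ 0 := by
    intro i hi
    obtain ⟨x, hx⟩ := Function.ne_iff.mp (h3b i hi)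
    by_cases he : ∀ j ∈ S.erase i, x j = true
    · have hxi : x i = false := by
        by_contra hxi
        apply hx
        have hall : ∀ j ∈ S, x j = true := by
          intro j hj
          by_cases hji : j = i
          · subst hji; exact Bool.not_eq_false (x j) |>.mp hxi
          · exact he j (Finset.mem_erase.mpr ⟨hji, hj⟩)
        rw [gate_all hall, gate_all he]
      have hnoS : ¬ ∀ j ∈ S, x j = true := by
        intro h; have := h i hi; rw [this] at hxi; exact Bool.noConfusion hxi
      refine ⟨x, fun j hj hji => he j (Finset.mem_erase.mpr ⟨hji, hj⟩), hxi, ?_⟩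
      intro h0
      apply hx
      rw [gate_not hnoS, gate_all he, h0, mul_zero]
    · exfalso
      apply hx
      have hnoS : ¬ ∀ j ∈ S, x j = true :=
        fun h => he (fun j hj => h j (Finset.mem_erase.mp hj).2)
      rw [gate_not hnoS, gate_not he]
  obtain ⟨A, hSA, hSA', Mψ⟩ := sep_minor h1
  obtain ⟨C, hSC, hSC', MG⟩ := sep_minor h2
  -- choose p ∈ S ∩ C, q ∈ S \ C, on opposite sides of A
  obtain ⟨p, q, hpS, hqS, hpC, hqC, hiff⟩ :
      ∃ p q, p ∈ S ∧ q ∈ S ∧ p ∈ C ∧ q ∉ C ∧ (p ∈ A ↔ q ∉ A) := by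
    obtain ⟨c1, hc1⟩ := hSC
    obtain ⟨c2, hc2⟩ := hSC'
    obtain ⟨a1, ha1⟩ := hSA
    obtain ⟨a2, ha2⟩ := hSA'
    simp only [Finset.mem_inter, Finset.mem_sdiff] at hc1 hc2 ha1 ha2
    by_cases hA1 : c1 ∈ A
    · by_cases hA2 : c2 ∈ A
      · by_cases hA3 : a2 ∈ C
        · exact ⟨a2, c2, ha2.1, hc2.1, hA3, hc2.2, by simp [ha2.2, hA2]⟩
        · exact ⟨c1, a2, hc1.1, ha2.1, hc1.2, hA3, by simp [hA1, ha2.2]⟩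
      · exact ⟨c1, c2, hc1.1, hc2.1, hc1.2, hc2.2, by simp [hA1, hA2]⟩
    · by_cases hA2 : c2 ∈ A
      · exact ⟨c1, c2, hc1.1, hc2.1, hc1.2, hc2.2, by simp [hA1, hA2]⟩
      · by_cases hA3 : a1 ∈ C
        · exact ⟨a1, c2, ha1.1, hc2.1, hA3, hc2.2, by simp [ha1.2, hA2]⟩
        · exact ⟨c1, a1, hc1.1, ha1.1, hc1.2, hA3, by simp [hA1, ha1.2]⟩
  obtain ⟨xp, hxp1, hxp2, hxp3⟩ := hwit p hpS
  obtain ⟨xq, hxq1, hxq2, hxq3⟩ := hwit q hqS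
  by_cases hpA : p ∈ A
  · exact core S A C η hη0 hη1 ψ Mψ MG p q hpS hqS hpA hpC (hiff.mp hpA) hqC
      xs xp xq hxs_all hxs_ne hxp1 hxp2 hxp3 hxq1 hxq2 hxq3
  · -- symmetric case: swap the roles of ψ and the gated state
    have hqA : q ∈ A := by
      by_contra h
      exact hpA (hiff.mpr h)
    have hgg : gate n S η⁻¹ (gate n S η ψ) = ψ := gate_inv S η hη0 ψ
    have hinv0 : (η⁻¹ : ℂ) ≠ 0 := inv_ne_zero hη0
    have hinv1 : (η⁻¹ : ℂ) ≠ 1 := by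
      intro h
      apply hη1
      rw [← inv_inv η, h, inv_one]
    have Mψ' : ∀ x y, gate n S η ψ (cmb Cᶜ x y) * gate n S η ψ (cmb Cᶜ y x)
        = gate n S η ψ x * gate n S η ψ y := by
      intro x y
      rw [cmb_compl, cmb_compl]
      linear_combination MG y x
    have MG'' : ∀ x y, gate n S η⁻¹ (gate n S η ψ) (cmb A x y)
        * gate n S η⁻¹ (gate n S η ψ) (cmb A y x)
        = gate n S η⁻¹ (gate n S η ψ) x * gate n S η⁻¹ (gate n S η ψ) y := by
      intro x y
      rw [hgg]
      exact Mψ x y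
    have hGxs : gate n S η ψ xs ≠ 0 := by
      rw [gate_all hxs_all]; exact mul_ne_zero hη0 hxs_ne
    have hGxq : gate n S η ψ xq ≠ 0 := by
      have hnoS : ¬ ∀ j ∈ S, xq j = true := by
        intro h; have := h q hqS; rw [this] at hxq2; exact Bool.noConfusion hxq2
      rw [gate_not hnoS]; exact hxq3
    have hGxp : gate n S η ψ xp ≠ 0 := by
      have hnoS : ¬ ∀ j ∈ S, xp j = true := by
        intro h; have := h p hpS; rw [this] at hxp2; exact Bool.noConfusion hxp2
      rw [gate_not hnoS]; exact hxp3
    exact core S Cᶜ A η⁻¹ hinv0 hinv1 (gate n S η ψ) Mψ' MG'' q p hqS hpS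
      (Finset.mem_compl.mpr hqC) hqA (by simp [hpC]) hpA
      xs xq xp hxs_all hGxs hxq1 hxq2 hGxq hxp1 hxp2 hGxp
end

section
/- Case 3 of the main theorem: Let η ≠ 1 with |η| = 1, S ⊆ [n] nonempty, and let G|x⟩ = η|x⟩ if x_{|S} is all ones, else G|x⟩ = |x⟩. Suppose ψ = ψ_A ⊗ ψ_B and Gψ = φ_C ⊗ φ_D for bipartitions [n] = A ∪ B = C ∪ D with S ∩ A = S ∩ C ≠ ∅ and S ∩ B = S ∩ D ≠ ∅. Suppose there is a string u with u_{|S} all ones and ⟨u|ψ⟩ ≠ 0. Then for every string x ∈ {0,1}^n having a zero both in S ∩ A and in S ∩ B, ⟨x|ψ⟩ = 0. -/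
theorem stmt_14 (n : ℕ) (η : ℂ) (hη : ‖η‖ = 1) (hη1 : η ≠ 1)
    (S A C : Finset (Fin n))
    (hAC : S ∩ A = S ∩ C) (hBD : S \ A = S \ C)
    (hSA : (S ∩ A).Nonempty) (hSB : (S \ A).Nonempty)
    (ψ : (Fin n → Bool) → ℂ)
    (ψA : ({ i : Fin n // i ∈ A } → Bool) → ℂ)
    (ψB : ({ i : Fin n // i ∉ A } → Bool) → ℂ)
    (φC : ({ i : Fin n // i ∈ C } → Bool) → ℂ)
    (φD : ({ i : Fin n // i ∉ C } → Bool) → ℂ)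
    (hψA : ∑ y, ‖ψA y‖ ^ 2 = 1) (hψB : ∑ z, ‖ψB z‖ ^ 2 = 1)
    (hφC : ∑ y, ‖φC y‖ ^ 2 = 1) (hφD : ∑ z, ‖φD z‖ ^ 2 = 1)
    (hfac : ∀ x : Fin n → Bool,
      ψ x = ψA (fun i => x i.1) * ψB (fun i => x i.1))
    (hGfac : ∀ x : Fin n → Bool,
      (if ∀ i ∈ S, x i = true then η else 1) * ψ x =
        φC (fun i => x i.1) * φD (fun i => x i.1))
    (u : Fin n → Bool) (hu1 : ∀ i ∈ S, u i = true) (hu2 : ψ u ≠ 0) :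
    ∀ x : Fin n → Bool,
      (∃ i ∈ S ∩ A, x i = false) → (∃ i ∈ S \ A, x i = false) → ψ x = 0 := by
  rintro x ⟨i₀, hi₀, hxi₀⟩ ⟨j₀, hj₀, hxj₀⟩
  by_contra hx
  have hη0 : η ≠ 0 := by rintro rfl; simp at hη
  rw [Finset.mem_inter] at hi₀
  rw [Finset.mem_sdiff] at hj₀
  have hi₀C : i₀ ∈ C := (Finset.mem_inter.mp (hAC ▸ Finset.mem_inter.mpr hi₀)).2
  have hj₀C : j₀ ∉ C := (Finset.mem_sdiff.mp (hBD ▸ Finset.mem_sdiff.mpr hj₀)).2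
  have hSsub : ∀ i ∈ S, (i ∈ A ↔ i ∈ C) := by
    intro i hi
    constructor
    · intro h; exact (Finset.mem_inter.mp (hAC ▸ Finset.mem_inter.mpr ⟨hi, h⟩)).2
    · intro h
      by_contra hA
      exact (Finset.mem_sdiff.mp (hBD ▸ Finset.mem_sdiff.mpr ⟨hi, hA⟩)).2 h
  have hphase : ∀ y : Fin n → Bool, (if ∀ i ∈ S, y i = true then η else 1) ≠ 0 := by
    intro y; split
    · exact hη0
    · exact one_ne_zero
  have key : ∀ y : Fin n → Bool, ψ y ≠ 0 →
      φC (fun i => y i.1) ≠ 0 ∧ φD (fun i => y i.1) ≠ 0 := by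
    intro y hy
    have h2 : φC (fun i => y i.1) * φD (fun i => y i.1) ≠ 0 := by
      rw [← hGfac y]; exact mul_ne_zero (hphase y) hy
    exact ⟨left_ne_zero_of_mul h2, right_ne_zero_of_mul h2⟩
  obtain ⟨huC, huD⟩ := key u hu2
  obtain ⟨hxC, hxD⟩ := key x hx
  -- hybrid strings over C
  set s1 : Fin n → Bool := fun i => if i ∈ C then u i else x i with hs1d
  set s2 : Fin n → Bool := fun i => if i ∈ C then x i else u i with hs2d
  have hs1C : (fun i : {i : Fin n // i ∈ C} => s1 i.1) = (fun i => u i.1) := by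
    funext i; simp [hs1d, i.2]
  have hs1D : (fun i : {i : Fin n // i ∉ C} => s1 i.1) = (fun i => x i.1) := by
    funext i; simp [hs1d, i.2]
  have hs2C : (fun i : {i : Fin n // i ∈ C} => s2 i.1) = (fun i => x i.1) := by
    funext i; simp [hs2d, i.2]
  have hs2D : (fun i : {i : Fin n // i ∉ C} => s2 i.1) = (fun i => u i.1) := by
    funext i; simp [hs2d, i.2]
  have hψs1 : ψ s1 ≠ 0 := by
    have h := hGfac s1
    rw [hs1C, hs1D] at h
    intro h0
    rw [h0, mul_zero] at h
    exact mul_ne_zero huC hxD h.symm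
  have hψs2 : ψ s2 ≠ 0 := by
    have h := hGfac s2
    rw [hs2C, hs2D] at h
    intro h0
    rw [h0, mul_zero] at h
    exact mul_ne_zero hxC huD h.symm
  -- nonzero factor values
  have hxfac := hfac x
  have haX : ψA (fun i : {i : Fin n // i ∈ A} => x i.1) ≠ 0 :=
    left_ne_zero_of_mul (hxfac ▸ hx)
  have hbX : ψB (fun i : {i : Fin n // i ∉ A} => x i.1) ≠ 0 :=
    right_ne_zero_of_mul (hxfac ▸ hx)
  have haU : ψA (fun i : {i : Fin n // i ∈ A} => s1 i.1) ≠ 0 :=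
    left_ne_zero_of_mul ((hfac s1) ▸ hψs1)
  have hbU : ψB (fun i : {i : Fin n // i ∉ A} => s2 i.1) ≠ 0 :=
    right_ne_zero_of_mul ((hfac s2) ▸ hψs2)
  -- the four mixed strings
  set wuu : Fin n → Bool := fun i => if i ∈ A then s1 i else s2 i with hwuud
  set wux : Fin n → Bool := fun i => if i ∈ A then s1 i else x i with hwuxd
  set wxu : Fin n → Bool := fun i => if i ∈ A then x i else s2 i with hwxud
  -- A-side restrictions
  have hwuuA : (fun i : {i : Fin n // i ∈ A} => wuu i.1) = (fun i => s1 i.1) := by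
    funext i; simp [hwuud, i.2]
  have hwuuB : (fun i : {i : Fin n // i ∉ A} => wuu i.1) = (fun i => s2 i.1) := by
    funext i; simp [hwuud, i.2]
  have hwuxA : (fun i : {i : Fin n // i ∈ A} => wux i.1) = (fun i => s1 i.1) := by
    funext i; simp [hwuxd, i.2]
  have hwuxB : (fun i : {i : Fin n // i ∉ A} => wux i.1) = (fun i => x i.1) := by
    funext i; simp [hwuxd, i.2]
  have hwxuA : (fun i : {i : Fin n // i ∈ A} => wxu i.1) = (fun i => x i.1) := by
    funext i; simp [hwxud, i.2]
  have hwxuB : (fun i : {i : Fin n // i ∉ A} => wxu i.1) = (fun i => s2 i.1) := by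
    funext i; simp [hwxud, i.2]
  -- C-side restrictions
  have hwuuC : (fun i : {i : Fin n // i ∈ C} => wuu i.1)
      = (fun i : {i : Fin n // i ∈ C} => if i.1 ∈ A then u i.1 else x i.1) := by
    funext i; simp [hwuud, hs1d, hs2d, i.2]
  have hwuuD : (fun i : {i : Fin n // i ∉ C} => wuu i.1)
      = (fun i : {i : Fin n // i ∉ C} => if i.1 ∈ A then x i.1 else u i.1) := by
    funext i; simp [hwuud, hs1d, hs2d, i.2]
  have hwuxC : (fun i : {i : Fin n // i ∈ C} => wux i.1)
      = (fun i : {i : Fin n // i ∈ C} => if i.1 ∈ A then u i.1 else x i.1) := by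
    funext i; simp [hwuxd, hs1d, i.2]
  have hwuxD : (fun i : {i : Fin n // i ∉ C} => wux i.1) = (fun i => x i.1) := by
    funext i; by_cases h : i.1 ∈ A <;> simp [hwuxd, hs1d, h, i.2]
  have hwxuC : (fun i : {i : Fin n // i ∈ C} => wxu i.1) = (fun i => x i.1) := by
    funext i; by_cases h : i.1 ∈ A <;> simp [hwxud, hs2d, h, i.2]
  have hwxuD : (fun i : {i : Fin n // i ∉ C} => wxu i.1)
      = (fun i : {i : Fin n // i ∉ C} => if i.1 ∈ A then x i.1 else u i.1) := by
    funext i; simp [hwxud, hs2d, i.2]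
  -- phases
  have hpuu : (∀ i ∈ S, wuu i = true) := by
    intro i hi
    by_cases h : i ∈ A
    · have hc : i ∈ C := (hSsub i hi).1 h
      simp [hwuud, hs1d, h, hc, hu1 i hi]
    · have hc : i ∉ C := fun hc => h ((hSsub i hi).2 hc)
      simp [hwuud, hs2d, h, hc, hu1 i hi]
  have hpux : ¬ (∀ i ∈ S, wux i = true) := by
    intro h
    have := h j₀ hj₀.1
    simp [hwuxd, hj₀.2, hxj₀] at this
  have hpxu : ¬ (∀ i ∈ S, wxu i = true) := by
    intro h
    have := h i₀ hi₀.1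
    simp [hwxud, hi₀.2, hxi₀] at this
  have hpx : ¬ (∀ i ∈ S, x i = true) := by
    intro h
    have := h i₀ hi₀.1
    simp [hxi₀] at this
  -- the four equations
  have E1 := hGfac wuu
  rw [if_pos hpuu, hwuuC, hwuuD, hfac wuu, hwuuA, hwuuB] at E1
  have E2 := hGfac wux
  rw [if_neg hpux, hwuxC, hwuxD, hfac wux, hwuxA, hwuxB, one_mul] at E2
  have E3 := hGfac wxu
  rw [if_neg hpxu, hwxuC, hwxuD, hfac wxu, hwxuA, hwxuB, one_mul] at E3
  have E4 := hGfac x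
  rw [if_neg hpx, hfac x, one_mul] at E4
  -- determinant argument
  set aU := ψA (fun i : {i : Fin n // i ∈ A} => s1 i.1)
  set aX := ψA (fun i : {i : Fin n // i ∈ A} => x i.1)
  set bU := ψB (fun i : {i : Fin n // i ∉ A} => s2 i.1)
  set bX := ψB (fun i : {i : Fin n // i ∉ A} => x i.1)
  have hM : aU * bU * (aX * bX) ≠ 0 :=
    mul_ne_zero (mul_ne_zero haU hbU) (mul_ne_zero haX hbX)
  set cU := φC (fun i : {i : Fin n // i ∈ C} => if i.1 ∈ A then u i.1 else x i.1) with hcUd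
  set dU := φD (fun i : {i : Fin n // i ∉ C} => if i.1 ∈ A then x i.1 else u i.1) with hdUd
  set cX := φC (fun i : {i : Fin n // i ∈ C} => x i.1) with hcXd
  set dX := φD (fun i : {i : Fin n // i ∉ C} => x i.1) with hdXd
  apply hη1
  have hkey : η * (aU * bU * (aX * bX)) = 1 * (aU * bU * (aX * bX)) := by
    linear_combination (aX * bX) * E1 + (cU * dU) * E4 - (aX * bU) * E2 - (cU * dX) * E3
  exact mul_right_cancel₀ hM hkey
end

section
/- Let η ≠ 1, |η| = 1, and let G be the gate on the n-qubit space applying the phase η precisely to basis strings that are all-ones on S ⊆ [n], where |S| ≥ 2 and S ∩ A = S ∩ C and S ∩ B = S ∩ D for bipartitions [n] = A ∪ B = C ∪ D with both parts meeting S. If ψ = ψ_A ⊗ ψ_B, Gψ = φ_C ⊗ φ_D, and additionally for every i ∈ S there is a string y with y_i = 0 and ⟨y|ψ⟩ ≠ 0, and there is a string u all-ones on S with ⟨u|ψ⟩ ≠ 0, then a contradiction follows (i.e., these hypotheses are jointly unsatisfiable). -/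
theorem stmt_15 (n : ℕ) (η : ℂ) (hη : ‖η‖ = 1) (hη1 : η ≠ 1)
    (S A C : Finset (Fin n)) (hS : 2 ≤ S.card)
    (hAC : S ∩ A = S ∩ C) (hBD : S \ A = S \ C)
    (hSA : (S ∩ A).Nonempty) (hSB : (S \ A).Nonempty)
    (ψ : (Fin n → Bool) → ℂ)
    (ψA : ({ i : Fin n // i ∈ A } → Bool) → ℂ)
    (ψB : ({ i : Fin n // i ∉ A } → Bool) → ℂ)
    (φC : ({ i : Fin n // i ∈ C } → Bool) → ℂ)
    (φD : ({ i : Fin n // i ∉ C } → Bool) → ℂ)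
    (hψA : ∑ y, ‖ψA y‖ ^ 2 = 1) (hψB : ∑ z, ‖ψB z‖ ^ 2 = 1)
    (hφC : ∑ y, ‖φC y‖ ^ 2 = 1) (hφD : ∑ z, ‖φD z‖ ^ 2 = 1)
    (hfac : ∀ x : Fin n → Bool,
      ψ x = ψA (fun i => x i.1) * ψB (fun i => x i.1))
    (hGfac : ∀ x : Fin n → Bool,
      (if ∀ i ∈ S, x i = true then η else 1) * ψ x =
        φC (fun i => x i.1) * φD (fun i => x i.1))
    (hnosimp : ∀ i ∈ S, ∃ y : Fin n → Bool, y i = false ∧ ψ y ≠ 0)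
    (u : Fin n → Bool) (hu1 : ∀ i ∈ S, u i = true) (hu2 : ψ u ≠ 0) :
    False := by
  obtain ⟨i0, hi0⟩ := hSA
  obtain ⟨j0, hj0⟩ := hSB
  rw [Finset.mem_inter] at hi0
  rw [Finset.mem_sdiff] at hj0
  obtain ⟨i0S, i0A⟩ := hi0
  obtain ⟨j0S, j0A⟩ := hj0
  have i0C : i0 ∈ C := by
    have h : i0 ∈ S ∩ C := hAC ▸ Finset.mem_inter.mpr ⟨i0S, i0A⟩
    exact (Finset.mem_inter.mp h).2
  have j0C : j0 ∉ C := by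
    have h : j0 ∈ S \ C := hBD ▸ Finset.mem_sdiff.mpr ⟨j0S, j0A⟩
    exact (Finset.mem_sdiff.mp h).2
  obtain ⟨y, hyi, hyne⟩ := hnosimp i0 i0S
  obtain ⟨z, hzj, hzne⟩ := hnosimp j0 j0S
  have hη0 : η ≠ 0 := by
    intro h
    rw [h] at hη
    simp at hη
  -- the eight relevant values
  set aU : ℂ := ψA (fun i => u i.1) with haU
  set bU : ℂ := ψB (fun i => u i.1) with hbU
  set aY : ℂ := ψA (fun i => if i.1 ∈ C then y i.1 else u i.1) with haY
  set bZ : ℂ := ψB (fun i => if i.1 ∈ C then u i.1 else z i.1) with hbZ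
  set cU : ℂ := φC (fun i => u i.1) with hcU
  set dU : ℂ := φD (fun i => u i.1) with hdU
  set cY : ℂ := φC (fun i => if i.1 ∈ A then y i.1 else u i.1) with hcY
  set dZ : ℂ := φD (fun i => if i.1 ∈ A then u i.1 else z i.1) with hdZ
  -- basic nonvanishing from ψ u, ψ y, ψ z
  have hu' := hfac u
  rw [hfac u] at hu2
  have haU0 : aU ≠ 0 := left_ne_zero_of_mul hu2
  have hbU0 : bU ≠ 0 := right_ne_zero_of_mul hu2
  have hyA0 : ψA (fun i => y i.1) ≠ 0 := by
    rw [hfac y] at hyne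
    exact left_ne_zero_of_mul hyne
  have hzB0 : ψB (fun i => z i.1) ≠ 0 := by
    rw [hfac z] at hzne
    exact right_ne_zero_of_mul hzne
  -- equation q1 : from u itself
  have q1 : η * (aU * bU) = cU * dU := by
    have h := hGfac u
    rw [if_pos hu1, hfac u] at h
    exact h
  have hcU0 : cU ≠ 0 := by
    intro h
    rw [h, zero_mul] at q1
    exact mul_ne_zero hη0 (mul_ne_zero haU0 hbU0) q1
  have hdU0 : dU ≠ 0 := by
    intro h
    rw [h, mul_zero] at q1
    exact mul_ne_zero hη0 (mul_ne_zero haU0 hbU0) q1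
  -- string V = (y on A, u off A) : shows cY ≠ 0
  have hcY0 : cY ≠ 0 := by
    have h := hGfac (fun k => if k ∈ A then y k else u k)
    rw [if_neg ?_, one_mul, hfac] at h
    · have e1 : (fun i : { i : Fin n // i ∈ A } =>
          (fun k => if k ∈ A then y k else u k) i.1) = fun i => y i.1 := by
        funext i; exact if_pos i.2
      have e2 : (fun i : { i : Fin n // i ∉ A } =>
          (fun k => if k ∈ A then y k else u k) i.1) = fun i => u i.1 := by
        funext i; exact if_neg i.2
      have e3 : (fun i : { i : Fin n // i ∈ C } =>
          (fun k => if k ∈ A then y k else u k) i.1) =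
          fun i => if i.1 ∈ A then y i.1 else u i.1 := rfl
      rw [e1, e2, e3] at h
      have hne : (φC fun i : { i : Fin n // i ∈ C } =>
          if i.1 ∈ A then y i.1 else u i.1) *
          (φD fun i : { i : Fin n // i ∉ C } =>
            (fun k => if k ∈ A then y k else u k) i.1) ≠ 0 := by
        rw [← h]; exact mul_ne_zero hyA0 hbU0
      exact left_ne_zero_of_mul hne
    · intro hall
      have := hall i0 i0S
      rw [if_pos i0A, hyi] at this
      exact Bool.false_ne_true this
  -- string W = (u on A, z off A) : shows dZ ≠ 0
  have hdZ0 : dZ ≠ 0 := by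
    have h := hGfac (fun k => if k ∈ A then u k else z k)
    rw [if_neg ?_, one_mul, hfac] at h
    · have e1 : (fun i : { i : Fin n // i ∈ A } =>
          (fun k => if k ∈ A then u k else z k) i.1) = fun i => u i.1 := by
        funext i; exact if_pos i.2
      have e2 : (fun i : { i : Fin n // i ∉ A } =>
          (fun k => if k ∈ A then u k else z k) i.1) = fun i => z i.1 := by
        funext i; exact if_neg i.2
      have e4 : (fun i : { i : Fin n // i ∉ C } =>
          (fun k => if k ∈ A then u k else z k) i.1) =
          fun i => if i.1 ∈ A then u i.1 else z i.1 := rfl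
      rw [e1, e2, e4] at h
      have hne : (φC fun i : { i : Fin n // i ∈ C } =>
          (fun k => if k ∈ A then u k else z k) i.1) *
          (φD fun i : { i : Fin n // i ∉ C } =>
            if i.1 ∈ A then u i.1 else z i.1) ≠ 0 := by
        rw [← h]; exact mul_ne_zero haU0 hzB0
      exact right_ne_zero_of_mul hne
    · intro hall
      have := hall j0 j0S
      rw [if_neg j0A, hzj] at this
      exact Bool.false_ne_true this
  -- string E2 = (if A then (if C then y else u) else u)
  have q2 : aY * bU = cY * dU := by
    have h := hGfac (fun k => if k ∈ A then (if k ∈ C then y k else u k) else u k)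
    rw [if_neg ?_, one_mul, hfac] at h
    · have e1 : (fun i : { i : Fin n // i ∈ A } =>
          (fun k => if k ∈ A then (if k ∈ C then y k else u k) else u k) i.1) =
          fun i => if i.1 ∈ C then y i.1 else u i.1 := by
        funext i; exact if_pos i.2
      have e2 : (fun i : { i : Fin n // i ∉ A } =>
          (fun k => if k ∈ A then (if k ∈ C then y k else u k) else u k) i.1) =
          fun i => u i.1 := by
        funext i; exact if_neg i.2
      have e3 : (fun i : { i : Fin n // i ∈ C } =>
          (fun k => if k ∈ A then (if k ∈ C then y k else u k) else u k) i.1) =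
          fun i => if i.1 ∈ A then y i.1 else u i.1 := by
        funext i
        by_cases hA : i.1 ∈ A <;> simp [hA, i.2]
      have e4 : (fun i : { i : Fin n // i ∉ C } =>
          (fun k => if k ∈ A then (if k ∈ C then y k else u k) else u k) i.1) =
          fun i => u i.1 := by
        funext i
        by_cases hA : i.1 ∈ A <;> simp [hA, i.2]
      rw [e1, e2, e3, e4] at h
      exact h
    · intro hall
      have := hall i0 i0S
      rw [if_pos i0A, if_pos i0C, hyi] at this
      exact Bool.false_ne_true this
  -- string E3 = (if A then u else (if C then u else z))
  have q3 : aU * bZ = cU * dZ := by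
    have h := hGfac (fun k => if k ∈ A then u k else (if k ∈ C then u k else z k))
    rw [if_neg ?_, one_mul, hfac] at h
    · have e1 : (fun i : { i : Fin n // i ∈ A } =>
          (fun k => if k ∈ A then u k else (if k ∈ C then u k else z k)) i.1) =
          fun i => u i.1 := by
        funext i; exact if_pos i.2
      have e2 : (fun i : { i : Fin n // i ∉ A } =>
          (fun k => if k ∈ A then u k else (if k ∈ C then u k else z k)) i.1) =
          fun i => if i.1 ∈ C then u i.1 else z i.1 := by
        funext i; exact if_neg i.2
      have e3 : (fun i : { i : Fin n // i ∈ C } =>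
          (fun k => if k ∈ A then u k else (if k ∈ C then u k else z k)) i.1) =
          fun i => u i.1 := by
        funext i
        by_cases hA : i.1 ∈ A <;> simp [hA, i.2]
      have e4 : (fun i : { i : Fin n // i ∉ C } =>
          (fun k => if k ∈ A then u k else (if k ∈ C then u k else z k)) i.1) =
          fun i => if i.1 ∈ A then u i.1 else z i.1 := by
        funext i
        by_cases hA : i.1 ∈ A <;> simp [hA, i.2]
      rw [e1, e2, e3, e4] at h
      exact h
    · intro hall
      have := hall j0 j0S
      rw [if_neg j0A, if_neg j0C, hzj] at this
      exact Bool.false_ne_true this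
  -- string E4 = (if A then (if C then y else u) else (if C then u else z))
  have q4 : aY * bZ = cY * dZ := by
    have h := hGfac (fun k => if k ∈ A then (if k ∈ C then y k else u k)
        else (if k ∈ C then u k else z k))
    rw [if_neg ?_, one_mul, hfac] at h
    · have e1 : (fun i : { i : Fin n // i ∈ A } =>
          (fun k => if k ∈ A then (if k ∈ C then y k else u k)
            else (if k ∈ C then u k else z k)) i.1) =
          fun i => if i.1 ∈ C then y i.1 else u i.1 := by
        funext i; exact if_pos i.2
      have e2 : (fun i : { i : Fin n // i ∉ A } =>
          (fun k => if k ∈ A then (if k ∈ C then y k else u k)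
            else (if k ∈ C then u k else z k)) i.1) =
          fun i => if i.1 ∈ C then u i.1 else z i.1 := by
        funext i; exact if_neg i.2
      have e3 : (fun i : { i : Fin n // i ∈ C } =>
          (fun k => if k ∈ A then (if k ∈ C then y k else u k)
            else (if k ∈ C then u k else z k)) i.1) =
          fun i => if i.1 ∈ A then y i.1 else u i.1 := by
        funext i
        by_cases hA : i.1 ∈ A <;> simp [hA, i.2]
      have e4 : (fun i : { i : Fin n // i ∉ C } =>
          (fun k => if k ∈ A then (if k ∈ C then y k else u k)
            else (if k ∈ C then u k else z k)) i.1) =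
          fun i => if i.1 ∈ A then u i.1 else z i.1 := by
        funext i
        by_cases hA : i.1 ∈ A <;> simp [hA, i.2]
      rw [e1, e2, e3, e4] at h
      exact h
    · intro hall
      have := hall j0 j0S
      rw [if_neg j0A, if_neg j0C, hzj] at this
      exact Bool.false_ne_true this
  -- remaining nonvanishing
  have haY0 : aY ≠ 0 := by
    intro h
    rw [h, zero_mul] at q2
    exact mul_ne_zero hcY0 hdU0 q2.symm
  have hbZ0 : bZ ≠ 0 := by
    intro h
    rw [h, mul_zero] at q3
    exact mul_ne_zero hcU0 hdZ0 q3.symm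
  -- combine
  have hX : aU * bU * (aY * bZ) ≠ 0 :=
    mul_ne_zero (mul_ne_zero haU0 hbU0) (mul_ne_zero haY0 hbZ0)
  have hfin : η * (aU * bU * (aY * bZ)) = 1 * (aU * bU * (aY * bZ)) := by
    calc η * (aU * bU * (aY * bZ)) = (η * (aU * bU)) * (aY * bZ) := by ring
      _ = (cU * dU) * (cY * dZ) := by rw [q1, q4]
      _ = (cY * dU) * (cU * dZ) := by ring
      _ = (aY * bU) * (aU * bZ) := by rw [q2, q3]
      _ = 1 * (aU * bU * (aY * bZ)) := by ring
  exact hη1 (mul_right_cancel₀ hX hfin)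
end
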